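/- A free filter F on ℕ is a P⁺-filter if and only if for every function Γ : ℕ → ℕ, either Γ is bounded on some element of F, or Γ is finite-to-one on some F-stationary set. -/

import Mathlib

/-!
If `Γ` is unbounded on every member of `F`, its superlevel sets `{n | k ≤ Γ n}` form a decreasing
sequence of `F`-stationary sets, and `Γ` is finite-to-one on any stationary pseudo-intersection of
them. Conversely, a decreasing sequence `(A k)` is encoded by its exit index, the least `k` with
`n ∉ A k`. Where it is finite-to-one, each `B \ A k` lies in finitely many of its fibres; and it
cannot be bounded by `C` on a member of a free filter, since then `(A C)ᶜ` would be in `F`.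
-/

/-- A set is `F`-stationary if its complement is not in `F`. -/
def FStat (F : Filter ℕ) (A : Set ℕ) : Prop := Aᶜ ∉ F

/-- `F` is a P⁺-filter. -/
def PPlus (F : Filter ℕ) : Prop :=
  ∀ A : ℕ → Set ℕ, (∀ k, FStat F (A k)) → Antitone A →
    ∃ B : Set ℕ, FStat F B ∧ ∀ k, (B \ A k).Finite

variable {F : Filter ℕ}

theorem fStat_setOf_le_apply_of_unbounded {Γ : ℕ → ℕ} (hΓ : ¬∃ S ∈ F, ∃ C, ∀ n ∈ S, Γ n ≤ C) (k : ℕ) :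
    FStat F {n | k ≤ Γ n} := fun hk =>
  hΓ ⟨_, hk, k, fun _ hn => le_of_not_ge hn⟩

theorem PPlus.bounded_or_finiteToOne (hP : PPlus F) (Γ : ℕ → ℕ) :
    (∃ S ∈ F, ∃ C, ∀ n ∈ S, Γ n ≤ C) ∨
      (∃ B : Set ℕ, FStat F B ∧ ∀ m, {n ∈ B | Γ n = m}.Finite) := by
  refine or_iff_not_imp_left.mpr fun hΓ => ?_
  obtain ⟨B, hB, hfin⟩ :=
    hP (fun k => {n | k ≤ Γ n}) (fStat_setOf_le_apply_of_unbounded hΓ) fun _ _ hij _ hn => hij.trans hn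
  exact ⟨B, hB, fun m => (hfin (m + 1)).subset fun _ ⟨hnB, hnm⟩ => ⟨hnB, by simp [hnm]⟩⟩

theorem finite_sep_le_of_finite_fibers {α : Type*} {B : Set α} {Γ : α → ℕ}
    (h : ∀ m, {n ∈ B | Γ n = m}.Finite) (k : ℕ) : {n ∈ B | Γ n ≤ k}.Finite :=
  ((Set.finite_Iic k).biUnion fun m _ => h m).subset fun _ ⟨hnB, hnk⟩ =>
    Set.mem_biUnion (Set.mem_Iic.mpr hnk) ⟨hnB, rfl⟩

open Classical in
/-- Defaulting to `n` on `⋂ k, A k` keeps the index unbounded on every member of a free filter. -/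
noncomputable def exitIndex (A : ℕ → Set ℕ) (n : ℕ) : ℕ :=
  if h : ∃ k, n ∉ A k then Nat.find h else n

theorem exitIndex_le_of_notMem {A : ℕ → Set ℕ} {n k : ℕ} (h : n ∉ A k) : exitIndex A n ≤ k := by
  classical
  rw [exitIndex, dif_pos ⟨k, h⟩]
  exact Nat.find_min' _ h

theorem notMem_of_exitIndex_le {A : ℕ → Set ℕ} (hA : Antitone A) {n C : ℕ}
    (hle : exitIndex A n ≤ C) (hlt : C < n) : n ∉ A C := by
  classical
  by_cases h : ∃ k, n ∉ A k
  · rw [exitIndex, dif_pos h] at hle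
    exact fun hn => Nat.find_spec h (hA hle hn)
  · rw [exitIndex, dif_neg h] at hle
    omega

theorem PPlus.of_bounded_or_finiteToOne (hfree : F ≤ Filter.cofinite)
    (hF : ∀ Γ : ℕ → ℕ, (∃ S ∈ F, ∃ C, ∀ n ∈ S, Γ n ≤ C) ∨
      (∃ B : Set ℕ, FStat F B ∧ ∀ m, {n ∈ B | Γ n = m}.Finite)) :
    PPlus F := by
  intro A hA hanti
  rcases hF (exitIndex A) with ⟨S, hS, C, hC⟩ | ⟨B, hB, hfin⟩
  · refine absurd ?_ (hA C)
    have hgt : {n | C < n} ∈ F := hfree (Filter.eventually_gt_atTop C |>.filter_mono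
      Nat.cofinite_eq_atTop.le)
    exact F.mem_of_superset (F.inter_mem hS hgt) fun n ⟨hnS, hn⟩ =>
      notMem_of_exitIndex_le hanti (hC n hnS) hn
  · exact ⟨B, hB, fun k => (finite_sep_le_of_finite_fibers hfin k).subset fun n ⟨hnB, hnA⟩ =>
      ⟨hnB, exitIndex_le_of_notMem hnA⟩⟩

theorem stmt_1_general (F : Filter ℕ) (hfree : F ≤ Filter.cofinite) :
    PPlus F ↔
      ∀ Γ : ℕ → ℕ,
        (∃ S ∈ F, ∃ C, ∀ n ∈ S, Γ n ≤ C) ∨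
        (∃ B : Set ℕ, FStat F B ∧ ∀ m, {n ∈ B | Γ n = m}.Finite) :=
  ⟨PPlus.bounded_or_finiteToOne, PPlus.of_bounded_or_finiteToOne hfree⟩

theorem stmt_1 (F : Filter ℕ) (hfree : F ≤ Filter.cofinite) [F.NeBot] :
    PPlus F ↔
      ∀ Γ : ℕ → ℕ,
        (∃ S ∈ F, ∃ C, ∀ n ∈ S, Γ n ≤ C) ∨
        (∃ B : Set ℕ, FStat F B ∧ ∀ m, {n ∈ B | Γ n = m}.Finite) :=
  stmt_1_general F hfree
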